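/- For every n ≥ 0, the number of projections of the partial Brauer monoid 𝒫ℬ_n of rank at most 2 equals I(n+2)/2, where I(k) denotes the k-th involution number. -/

import Mathlib

namespace DiagramDeg

/-- Vertex set of a partition diagram: `inl` = upper row, `inr` = lower (dashed) row. -/
abbrev V (n : ℕ) := Sum (Fin n) (Fin n)

/-- A partition diagram on `n̲ ∪ n̲′`: a set partition, i.e. an equivalence, of the `2n` vertices. -/
abbrev PD (n : ℕ) := Setoid (V n)

/-- Three-row vertex set for the product graph:
`inl` = top row, `inr ∘ inl` = middle row, `inr ∘ inr` = bottom row. -/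
abbrev W (n : ℕ) := Sum (Fin n) (V n)

/-- Embedding of the vertices of the first factor (top and middle rows). -/
def topmid {n : ℕ} : V n → W n := Sum.elim Sum.inl (fun j => Sum.inr (Sum.inl j))

/-- Embedding of the vertices of the second factor (middle and bottom rows). -/
def midbot {n : ℕ} : V n → W n :=
  Sum.elim (fun i => Sum.inr (Sum.inl i)) (fun j => Sum.inr (Sum.inr j))

/-- Embedding of the outer (top and bottom) rows. -/
def outer {n : ℕ} : V n → W n := Sum.elim Sum.inl (fun j => Sum.inr (Sum.inr j))

/-- The edges of the product graph `Π(α,β)`. -/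
def stepRel {n : ℕ} (α β : PD n) : W n → W n → Prop := fun u v =>
  (∃ x y : V n, α.r x y ∧ u = topmid x ∧ v = topmid y) ∨
  (∃ x y : V n, β.r x y ∧ u = midbot x ∧ v = midbot y)

/-- The product `αβ` of partition diagrams: `x, y` lie in the same block of `αβ` iff they are
connected in the product graph. -/
def comp {n : ℕ} (α β : PD n) : PD n :=
  Setoid.comap outer (Relation.EqvGen.setoid (stepRel α β))

/-- The identity partition diagram, with blocks `{i, i′}`. -/
def idPD (n : ℕ) : PD n := Setoid.ker (Sum.elim id id)

/-- The `*` involution of a diagram: interchange dashed and undashed vertices. -/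
def starPD {n : ℕ} (α : PD n) : PD n := Setoid.comap (Sum.elim Sum.inr Sum.inl) α

/-- The rank of a diagram: the number of transversal blocks, i.e. blocks meeting both rows. -/
noncomputable def rank {n : ℕ} (α : PD n) : ℕ :=
  Nat.card {c : Quotient α //
    (∃ i : Fin n, Quotient.mk α (Sum.inl i) = c) ∧
    (∃ j : Fin n, Quotient.mk α (Sum.inr j) = c)}

/-- A projection: `ε² = ε = ε*`. -/
def IsProjection {n : ℕ} (α : PD n) : Prop := comp α α = α ∧ starPD α = α

/-- `ker(α)`: the restriction of `α` to the upper row. -/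
def upperKer {n : ℕ} (α : PD n) : Fin n → Fin n → Prop := fun x y =>
  α.r (Sum.inl x) (Sum.inl y)

/-- Every block has size at most 2 (defining property of the partial Brauer monoid). -/
def BlocksAtMostTwo {n : ℕ} (α : PD n) : Prop :=
  ∀ x y z : V n, α.r x y → α.r x z → x = y ∨ x = z ∨ y = z

/-- Every block has size exactly 2 (defining property of the Brauer monoid). -/
def BlocksExactlyTwo {n : ℕ} (α : PD n) : Prop :=
  BlocksAtMostTwo α ∧ ∀ x : V n, ∃ y : V n, y ≠ x ∧ α.r x y

/-- Position of a vertex in the boundary order `1, …, n, n′, …, 1′` of the rectangle. -/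
def vpos (n : ℕ) : V n → ℕ := Sum.elim (fun i => (i : ℕ)) (fun j => 2 * n - 1 - (j : ℕ))

/-- Planarity: the partition is non-crossing with respect to the boundary order of the
rectangle spanned by the vertices (two blocks never interleave). -/
def IsPlanar {n : ℕ} (α : PD n) : Prop :=
  ¬ ∃ x y z w : V n, α.r x y ∧ α.r z w ∧ ¬ α.r x z ∧
      vpos n x < vpos n z ∧ vpos n z < vpos n y ∧ vpos n y < vpos n w

/-- The number of projections of rank `r` satisfying `pred`. -/
noncomputable def projCount (n : ℕ) (pred : PD n → Prop) (r : ℕ) : ℕ :=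
  Nat.card {α : PD n // pred α ∧ IsProjection α ∧ rank α = r}

/-- A right action of a semigroup (we only use the `Mul`). -/
def IsRAction {S : Type*} {X : Type*} [Mul S] (μ : X → S → X) : Prop :=
  ∀ (x : X) (a b : S), μ (μ x a) b = μ x (a * b)

/-- An action is faithful if distinct elements act distinctly. -/
def IsFaithful {S : Type*} {X : Type*} (μ : X → S → X) : Prop :=
  ∀ a b : S, (∀ x : X, μ x a = μ x b) → a = b

/-- `deg(S)`: the least `m ≥ 1` such that `S` has a faithful action on an `m`-element set,
equivalently embeds in the full transformation monoid `𝒯_m`. -/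
noncomputable def transDeg (S : Type*) [Mul S] : ℕ :=
  sInf {m : ℕ | 1 ≤ m ∧ ∃ μ : Fin m → S → Fin m, IsRAction μ ∧ IsFaithful μ}

/-- `deg′(S)`: the least `m ≥ 1` such that `S` embeds in the partial transformation
monoid `𝒫𝒯_m`, viewed as the monoid of self-maps of `Option (Fin m)` fixing `none`. -/
noncomputable def pTransDeg (S : Type*) [Mul S] : ℕ :=
  sInf {m : ℕ | 1 ≤ m ∧ ∃ μ : Option (Fin m) → S → Option (Fin m),
    IsRAction μ ∧ (∀ a : S, μ none a = none) ∧ IsFaithful μ}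

/-- A right congruence: a right-compatible equivalence. -/
def IsRightCongruence {S : Type*} [Mul S] (σ : Setoid S) : Prop :=
  ∀ a b s : S, σ.r a b → σ.r (a * s) (b * s)

/-- `deg_rc(S)`: the least `m ≥ 1` such that `S` has a faithful right congruence action
(the action on `S/σ` by `[x]·a = [xa]`) of degree `m`. -/
noncomputable def rcDeg (S : Type*) [Monoid S] : ℕ :=
  sInf {m : ℕ | 1 ≤ m ∧ ∃ σ : Setoid S, IsRightCongruence σ ∧
    Nat.card (Quotient σ) = m ∧
    ∀ a b : S, (∀ x : S, Quotient.mk σ (x * a) = Quotient.mk σ (x * b)) → a = b}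

/-- A two-sided congruence, as a relation. -/
def IsTwoSidedCong {S : Type*} [Mul S] (τ : S → S → Prop) : Prop :=
  Equivalence τ ∧ ∀ a b s : S, τ a b → τ (a * s) (b * s) ∧ τ (s * a) (s * b)

/-- Bell numbers: the number of set partitions (equivalence relations) of a `k`-set. -/
noncomputable def bell (k : ℕ) : ℕ := Nat.card (Setoid (Fin k))

/-- Involution numbers: the number of self-inverse permutations of a `k`-set. -/
noncomputable def involNum (k : ℕ) : ℕ :=
  Nat.card {f : Equiv.Perm (Fin k) // ∀ x, f (f x) = x}

/-- Motzkin numbers, via the standard binomial–Catalan formula. -/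
def motzkin (k : ℕ) : ℕ := ∑ i ∈ Finset.range (k / 2 + 1), k.choose (2 * i) * catalan i

end DiagramDeg


/-!
A projection `ε` of `𝒫ℬ_n` has only transversals of the form `{i, i'}`: if `{i, j'}` is a block
then so is `{j, i'}` (as `ε* = ε`), and in `ε ε = ε` the vertex `i` is joined through `j` in the
middle row to `i'`, so the block of `i` would have three elements unless `i = j`. Since the lower
row mirrors the upper one, `ε` is determined by the involution of `n̲` whose orbits are its upper
blocks together with the set `F` of fixed points `i` for which `{i, i'}` is a block; conversely
every such pair gives a projection of rank `#F`. Hence `𝒫ℬ_n` has `C(n, r) I(n - r)` projections of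
rank `r`, and the claim becomes `I(n + 2) = 2 (I(n) + n I(n - 1) + C(n, 2) I(n - 2))`, which is
the recurrence `I(m + 2) = I(m + 1) + (m + 1) I(m)` applied twice.
-/

open Finset

instance {X : Type*} [Finite X] : Finite (Setoid X) :=
  Finite.of_injective (fun s : Setoid X => s.r) fun _ _ h =>
    Setoid.ext fun a b => iff_of_eq (congrFun₂ h a b)

theorem Nat.card_subtype_and_le_eq_sum {X : Type*} [Finite X] (P : X → Prop) (f : X → ℕ) (k : ℕ) :
    Nat.card {x // P x ∧ f x ≤ k} = ∑ r ∈ range (k + 1), Nat.card {x // P x ∧ f x = r} := by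
  classical
  have := Fintype.ofFinite X
  simp only [Nat.card_eq_fintype_card, Fintype.card_subtype]
  rw [card_eq_sum_card_fiberwise (f := f) (t := range (k + 1)) fun x hx => by
    simpa [Nat.lt_succ_iff] using (mem_filter.1 hx).2.2]
  refine sum_congr rfl fun r hr => congr_arg _ ?_
  rw [filter_filter]
  exact filter_congr fun x _ =>
    ⟨fun h => ⟨h.1.1, h.2⟩, fun h => ⟨⟨h.1, h.2 ▸ mem_range_succ_iff.1 hr⟩, h.2⟩⟩

namespace DiagramDeg

open Function

section Involutions

def permInvolutiveEquiv (X : Type*) :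
    {σ : Equiv.Perm X // ∀ x, σ (σ x) = x} ≃ {f : X → X // Involutive f} where
  toFun σ := ⟨σ.1, σ.2⟩
  invFun f := ⟨f.2.toPerm, f.2⟩

variable {X : Type*}

theorem card_involutive [Fintype X] :
    Nat.card {f : X → X // Involutive f} = involNum (Fintype.card X) := by
  rw [← Nat.card_congr (permInvolutiveEquiv X)]
  refine Nat.card_congr ((Equiv.permCongr (Fintype.equivFin X)).subtypeEquiv fun σ => ?_)
  simp only [Equiv.permCongr_apply]
  exact ⟨fun h y => by simp [h], fun h x => by simpa using h (Fintype.equivFin X x)⟩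

def involutiveEqOnEquiv [DecidableEq X] (S : Finset X) {ρ : X → X} (hρ : Involutive ρ)
    (hρS : ∀ x ∈ S, ρ x ∈ S) :
    {g : X → X // Involutive g ∧ Set.EqOn g ρ S} ≃
      {h : {x // x ∉ S} → {x // x ∉ S} // Involutive h} where
  toFun g := ⟨fun x => ⟨g.1 x, fun hx => x.2 <| by
      simpa [← g.2.2 hx, g.2.1 x] using hρS _ hx⟩, fun x => Subtype.ext (g.2.1 x)⟩
  invFun h := ⟨fun x => if hx : x ∈ S then ρ x else h.1 ⟨x, hx⟩, by
    refine ⟨fun x => ?_, fun x hx => dif_pos hx⟩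
    by_cases hx : x ∈ S
    · simp [hx, hρS x hx, hρ x]
    · simp [hx, (h.1 ⟨x, hx⟩).2, h.2 ⟨x, hx⟩]⟩
  left_inv g := by
    ext x
    by_cases hx : x ∈ S
    · simp [hx, g.2.2 hx]
    · simp [hx]
  right_inv h := by
    ext x
    simp [x.2]

theorem card_involutive_eqOn [Fintype X] [DecidableEq X] (S : Finset X) {ρ : X → X}
    (hρ : Involutive ρ) (hρS : ∀ x ∈ S, ρ x ∈ S) :
    Nat.card {g : X → X // Involutive g ∧ Set.EqOn g ρ S} = involNum (Fintype.card X - #S) := by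
  rw [Nat.card_congr (involutiveEqOnEquiv S hρ hρS), card_involutive,
    Fintype.card_subtype_compl, Fintype.card_coe]

theorem card_involutive_apply_eq_self [Fintype X] [DecidableEq X] (x : X) :
    Nat.card {g : {g : X → X // Involutive g} // g.1 x = x} = involNum (Fintype.card X - 1) := by
  rw [← card_singleton x, ← card_involutive_eqOn (ρ := id) {x} (fun _ => rfl) (by simp)]
  exact Nat.card_congr ((Equiv.subtypeSubtypeEquivSubtypeInter _ fun g : X → X => g x = x).trans
    (Equiv.subtypeEquivRight fun g => by simp))

theorem card_involutive_apply_eq_of_ne [Fintype X] [DecidableEq X] {x y : X} (hxy : x ≠ y) :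
    Nat.card {g : {g : X → X // Involutive g} // g.1 x = y} = involNum (Fintype.card X - 2) := by
  rw [← card_pair hxy,
    ← card_involutive_eqOn {x, y} (Equiv.swap_apply_self x y) (by simp [Equiv.swap_apply_def])]
  refine Nat.card_congr ((Equiv.subtypeSubtypeEquivSubtypeInter _ fun g : X → X => g x = y).trans
    (Equiv.subtypeEquivRight fun g => ?_))
  simp only [Set.EqOn, coe_insert, coe_singleton, Set.mem_insert_iff, Set.mem_singleton_iff,
    forall_eq_or_imp, forall_eq, Equiv.swap_apply_left, Equiv.swap_apply_right]
  exact ⟨fun ⟨hg, hxy⟩ => ⟨hg, hxy, hxy ▸ hg x⟩, fun ⟨hg, hxy, _⟩ => ⟨hg, hxy⟩⟩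

theorem involNum_add_two (m : ℕ) : involNum (m + 2) = involNum (m + 1) + (m + 1) * involNum m := by
  -- sort the involutions of `Option (Fin (m + 1))` by the image of `none`
  have hfib := Nat.card_congr
    (Equiv.sigmaFiberEquiv fun g : {g : Option (Fin (m + 1)) → Option (Fin (m + 1)) //
      Involutive g} => g.1 none).symm
  rw [Nat.card_sigma, Fintype.sum_option, card_involutive] at hfib
  simpa [card_involutive_apply_eq_self, card_involutive_apply_eq_of_ne] using hfib

theorem involNum_zero : involNum 0 = 1 :=
  Nat.card_eq_one_iff_unique.mpr ⟨inferInstance, ⟨⟨1, fun _ => rfl⟩⟩⟩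

theorem involNum_one : involNum 1 = 1 :=
  Nat.card_eq_one_iff_unique.mpr ⟨inferInstance, ⟨⟨1, fun _ => rfl⟩⟩⟩

end Involutions

theorem involNum_add_two_eq_two_mul_sum (n : ℕ) :
    involNum (n + 2) = 2 * ∑ r ∈ range 3, n.choose r * involNum (n - r) := by
  simp only [sum_range_succ, sum_range_zero, Nat.choose_zero_right, Nat.choose_one_right]
  match n with
  | 0 => simp [involNum_add_two, involNum_zero, involNum_one]
  | 1 => simp [involNum_add_two, involNum_zero, involNum_one]
  | m + 2 =>
    have hchoose : 2 * (m + 2).choose 2 = (m + 2) * (m + 1) := by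
      rw [Nat.choose_two_right]; exact Nat.mul_div_cancel' (Nat.even_mul_pred_self (m + 2)).two_dvd
    simp only [Nat.add_sub_cancel, Nat.sub_zero, show m + 2 - 1 = m + 1 from rfl,
      involNum_add_two (m + 2), involNum_add_two (m + 1)]
    nlinarith [hchoose, involNum_add_two m]

variable {n : ℕ}

section Composition

variable {α β : PD n} {i j k : Fin n}

theorem rel_comp_of_rel_inl (h : α.r (.inl i) (.inl j)) : (comp α β).r (.inl i) (.inl j) :=
  Relation.EqvGen.rel _ _ (Or.inl ⟨_, _, h, rfl, rfl⟩)

theorem rel_comp_of_rel_inr (h : β.r (.inr i) (.inr j)) : (comp α β).r (.inr i) (.inr j) :=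
  Relation.EqvGen.rel _ _ (Or.inr ⟨_, _, h, rfl, rfl⟩)

theorem rel_comp_of_rel_of_rel (h₁ : α.r (.inl i) (.inr k)) (h₂ : β.r (.inl k) (.inr j)) :
    (comp α β).r (.inl i) (.inr j) :=
  .trans _ _ _ (.rel _ _ (Or.inl ⟨_, _, h₁, rfl, rfl⟩)) (.rel _ _ (Or.inr ⟨_, _, h₂, rfl, rfl⟩))

def toUpper : V n → V n := Sum.elim Sum.inl Sum.inl

/-- Collapses the middle row of the product graph onto the top row. -/
def collapse : W n → V n := Sum.elim Sum.inl (Sum.elim Sum.inl Sum.inr)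

theorem comp_le_of_toUpper {γ : PD n} (hα : ∀ x y, α.r x y → γ.r (toUpper x) (toUpper y))
    (hβ : β ≤ γ) : comp α β ≤ γ := by
  have key : ∀ u v, Relation.EqvGen (stepRel α β) u v → γ.r (collapse u) (collapse v) := by
    intro u v huv
    induction huv with
    | rel u v hst =>
      rcases hst with ⟨x, y, hxy, rfl, rfl⟩ | ⟨x, y, hxy, rfl, rfl⟩
      · rcases x with _ | _ <;> rcases y with _ | _ <;> exact hα _ _ hxy
      · rcases x with _ | _ <;> rcases y with _ | _ <;> exact hβ hxy
    | refl u => exact γ.refl _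
    | symm u v _ ih => exact γ.symm ih
    | trans u v w _ _ ih₁ ih₂ => exact γ.trans ih₁ ih₂
  intro x y hxy
  rcases x with _ | _ <;> rcases y with _ | _ <;> exact key _ _ hxy

end Composition

section OfInvolution

def projRel (g : Fin n → Fin n) (F : Finset (Fin n)) : V n → V n → Prop
  | .inl i, .inl j => i = j ∨ g i = j
  | .inl i, .inr j => i = j ∧ i ∈ F
  | .inr i, .inl j => i = j ∧ i ∈ F
  | .inr i, .inr j => i = j ∨ g i = j

variable {g : Fin n → Fin n} {F : Finset (Fin n)}

theorem projRel_equivalence (hg : Involutive g) (hF : ∀ i ∈ F, g i = i) :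
    Equivalence (projRel g F) where
  refl x := by cases x <;> simp [projRel]
  symm := by
    rintro (i | i) (j | j) h <;> simp only [projRel] at * <;> grind [hg i]
  trans := by
    rintro (i | i) (j | j) (k | k) h₁ h₂ <;> simp only [projRel] at * <;> grind [hg i]

def projOf (g : Fin n → Fin n) (F : Finset (Fin n)) (hg : Involutive g)
    (hF : ∀ i ∈ F, g i = i) : PD n :=
  ⟨projRel g F, projRel_equivalence hg hF⟩

variable (hg : Involutive g) (hF : ∀ i ∈ F, g i = i)

theorem blocksAtMostTwo_projOf : BlocksAtMostTwo (projOf g F hg hF) := by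
  rintro x y z (h₁ : projRel g F x y) (h₂ : projRel g F x z)
  rcases x with i | i <;> rcases y with j | j <;> rcases z with k | k <;>
    simp only [projRel] at h₁ h₂ <;> grind

theorem starPD_projOf : starPD (projOf g F hg hF) = projOf g F hg hF :=
  Setoid.ext <| by rintro (i | i) (j | j) <;> exact Iff.rfl

theorem comp_projOf : comp (projOf g F hg hF) (projOf g F hg hF) = projOf g F hg hF := by
  refine le_antisymm (comp_le_of_toUpper ?_ le_rfl) ?_
  · rintro (i | i) (j | j) (h : projRel g F _ _) <;> show projRel g F _ _ <;>
      simp only [projRel, toUpper, Sum.elim_inl, Sum.elim_inr] at h ⊢ <;> grind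
  · rintro (i | i) (j | j) (h : projRel g F _ _)
    · exact rel_comp_of_rel_inl h
    · obtain ⟨rfl, hi⟩ := h
      exact rel_comp_of_rel_of_rel (k := i) ⟨rfl, hi⟩ ⟨rfl, hi⟩
    · obtain ⟨rfl, hi⟩ := h
      exact (comp _ _).symm (rel_comp_of_rel_of_rel (k := i) ⟨rfl, hi⟩ ⟨rfl, hi⟩)
    · exact rel_comp_of_rel_inr h

theorem isProjection_projOf : IsProjection (projOf g F hg hF) :=
  ⟨comp_projOf hg hF, starPD_projOf hg hF⟩

theorem rank_projOf : rank (projOf g F hg hF) = #F := by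
  set ε := projOf g F hg hF
  have hbij : Bijective fun i : F => (⟨Quotient.mk ε (.inl i.1), ⟨i.1, rfl⟩,
      ⟨i.1, Quotient.sound ⟨rfl, i.2⟩⟩⟩ : {c : Quotient ε //
        (∃ i, Quotient.mk ε (.inl i) = c) ∧ (∃ j, Quotient.mk ε (.inr j) = c)}) := by
    constructor
    · rintro ⟨a, ha⟩ ⟨b, hb⟩ hab
      have h : projRel g F (.inl a) (.inl b) := Quotient.exact (congr_arg Subtype.val hab)
      simp only [projRel] at h
      grind
    · rintro ⟨c, ⟨i, rfl⟩, ⟨j, hj⟩⟩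
      obtain ⟨rfl, hi⟩ : projRel g F (.inl i) (.inr j) := Quotient.exact hj.symm
      exact ⟨⟨i, hi⟩, rfl⟩
  rw [rank, ← Nat.card_eq_of_bijective _ hbij, Nat.card_eq_fintype_card, Fintype.card_coe]

end OfInvolution

section OfProjection

variable {α : PD n} {i j : Fin n}

theorem rel_inr_inr_iff (hS : starPD α = α) : α.r (.inr i) (.inr j) ↔ α.r (.inl i) (.inl j) :=
  Setoid.ext_iff.mp hS (.inl i) (.inl j)

theorem eq_of_rel_inl_inr (hB : BlocksAtMostTwo α) (hP : IsProjection α)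
    (h : α.r (.inl i) (.inr j)) : i = j := by
  have hji : α.r (.inl j) (.inr i) := α.symm ((Setoid.ext_iff.mp hP.2 (.inl i) (.inr j)).2 h)
  -- `i` is joined to `j'` and, through the middle row, to `i'` in `α α = α`
  have hii := rel_comp_of_rel_of_rel h hji
  rw [hP.1] at hii
  rcases hB _ _ _ h hii with h' | h' | h' <;> simp_all

open Classical in
noncomputable def partner (α : PD n) (i : Fin n) : Fin n :=
  if h : ∃ j ≠ i, α.r (.inl i) (.inl j) then h.choose else i

theorem rel_partner (α : PD n) (i : Fin n) : α.r (.inl i) (.inl (partner α i)) := by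
  unfold partner
  split_ifs with h
  · exact h.choose_spec.2
  · exact α.refl _

theorem rel_inl_inl_iff (hB : BlocksAtMostTwo α) :
    α.r (.inl i) (.inl j) ↔ i = j ∨ partner α i = j := by
  refine ⟨fun h => or_iff_not_imp_left.2 fun hij => ?_, ?_⟩
  · have hex : ∃ k ≠ i, α.r (.inl i) (.inl k) := ⟨j, Ne.symm hij, h⟩
    rw [partner, dif_pos hex]
    rcases hB _ _ _ hex.choose_spec.2 h with h' | h' | h' <;> grind
  · rintro (rfl | rfl)
    exacts [α.refl _, rel_partner α i]

theorem partner_involutive (hB : BlocksAtMostTwo α) : Involutive (partner α) := fun i => by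
  rcases (rel_inl_inl_iff hB).1 (α.symm (rel_partner α i)) with h | h
  · rw [h, h]
  · exact h

open Classical in
noncomputable def transversalSet (α : PD n) : Finset (Fin n) :=
  {i | α.r (.inl i) (.inr i)}

theorem mem_transversalSet : i ∈ transversalSet α ↔ α.r (.inl i) (.inr i) := by
  simp [transversalSet]

theorem partner_eq_of_mem_transversalSet (hB : BlocksAtMostTwo α) :
    ∀ i ∈ transversalSet α, partner α i = i := fun i hi => by
  rcases hB _ _ _ (rel_partner α i) (mem_transversalSet.1 hi) with h | h | h <;> simp at h
  exact h.symm

theorem rel_inl_inr_iff (hB : BlocksAtMostTwo α) (hP : IsProjection α) :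
    α.r (.inl i) (.inr j) ↔ i = j ∧ i ∈ transversalSet α :=
  ⟨fun h => ⟨eq_of_rel_inl_inr hB hP h, mem_transversalSet.2 (eq_of_rel_inl_inr hB hP h ▸ h)⟩,
    fun ⟨hij, hi⟩ => hij ▸ mem_transversalSet.1 hi⟩

theorem projOf_partner (hB : BlocksAtMostTwo α) (hP : IsProjection α) :
    projOf (partner α) (transversalSet α) (partner_involutive hB)
      (partner_eq_of_mem_transversalSet hB) = α := by
  refine Setoid.ext ?_
  rintro (i | i) (j | j) <;> change projRel _ _ _ _ ↔ _ <;> simp only [projRel]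
  · exact (rel_inl_inl_iff hB).symm
  · exact (rel_inl_inr_iff hB hP).symm
  · rw [α.comm', rel_inl_inr_iff hB hP]
    constructor <;> rintro ⟨rfl, hi⟩ <;> exact ⟨rfl, hi⟩
  · exact ((rel_inr_inr_iff hP.2).trans (rel_inl_inl_iff hB)).symm

end OfProjection

section Parametrization

variable {g : Fin n → Fin n} {F : Finset (Fin n)} (hg : Involutive g) (hF : ∀ i ∈ F, g i = i)

theorem partner_projOf : partner (projOf g F hg hF) = g := funext fun i => by
  have h (j : Fin n) : i = j ∨ g i = j ↔ i = j ∨ partner (projOf g F hg hF) i = j :=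
    rel_inl_inl_iff (blocksAtMostTwo_projOf hg hF)
  grind [h (g i), h (partner (projOf g F hg hF) i)]

theorem transversalSet_projOf : transversalSet (projOf g F hg hF) = F := by
  ext i
  exact mem_transversalSet.trans ⟨And.right, fun hi => ⟨rfl, hi⟩⟩

end Parametrization

noncomputable def projectionEquiv (n r : ℕ) :
    {α : PD n // BlocksAtMostTwo α ∧ IsProjection α ∧ rank α = r} ≃
      Σ F : {F : Finset (Fin n) // #F = r},
        {g : Fin n → Fin n // Involutive g ∧ Set.EqOn g id F} where
  toFun := fun ⟨α, hB, hP, hr⟩ =>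
    ⟨⟨transversalSet α, by
      rw [← rank_projOf (partner_involutive hB) (partner_eq_of_mem_transversalSet hB),
        projOf_partner hB hP, hr]⟩,
      ⟨partner α, partner_involutive hB, fun i hi => partner_eq_of_mem_transversalSet hB i hi⟩⟩
  invFun := fun ⟨⟨F, hF⟩, ⟨g, hg, hgF⟩⟩ =>
    ⟨projOf g F hg fun _ hi => hgF hi, blocksAtMostTwo_projOf _ _, isProjection_projOf _ _,
      (rank_projOf _ _).trans hF⟩
  left_inv := fun ⟨_, hB, hP, _⟩ => Subtype.ext (projOf_partner hB hP)
  right_inv := fun ⟨⟨_, _⟩, ⟨_, hg, hgF⟩⟩ =>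
    Sigma.subtype_ext (Subtype.ext (transversalSet_projOf hg _)) (partner_projOf hg _)

theorem projCount_blocksAtMostTwo (n r : ℕ) :
    projCount n BlocksAtMostTwo r = n.choose r * involNum (n - r) := by
  classical
  rw [projCount, Nat.card_congr (projectionEquiv n r), Nat.card_sigma]
  calc _ = ∑ _F : {F : Finset (Fin n) // #F = r}, involNum (n - r) :=
        sum_congr rfl fun F _ => by
          rw [card_involutive_eqOn (ρ := id) _ (fun _ => rfl) fun _ h => h, Fintype.card_fin, F.2]
    _ = _ := by simp

/-- For `n ≥ 0`, the number of projections of the partial Brauer monoid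
`𝒫ℬ_n` of rank at most `2` equals `I(n+2)/2`, where `I` is the involution sequence. -/
theorem statement16 (n : ℕ) :
    2 * Nat.card {α : PD n // BlocksAtMostTwo α ∧ IsProjection α ∧ rank α ≤ 2}
      = involNum (n + 2) := by
  have hsplit :=
    Nat.card_subtype_and_le_eq_sum (fun α : PD n => BlocksAtMostTwo α ∧ IsProjection α) rank 2
  simp only [and_assoc] at hsplit
  rw [hsplit, involNum_add_two_eq_two_mul_sum]
  exact congr_arg _ (sum_congr rfl fun r _ => projCount_blocksAtMostTwo n r)

end DiagramDeg
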